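/- Let n_w a_s k = k(γ) n_u a_r be an Iwasawa (NAK) factorization in SO(1,d), where k(γ) = diag(1, u₀) with u₀ = (u_{ij}) ∈ SO(d). Then s^{-1} = ((1−u_{11})/2) r + ((1+u_{11})/2 + β) r^{-1}, where β = (1−u_{11})|u|²/2 − Σ_{i=2}^{n} u_{1i} u_{i-1}, with u ∈ ℝ^{n-1} embedded as (u₁,…,u_{n-1},0,…,0) in ℝ^{d-1}. -/

import Mathlib

/-!
Let `ℓ = e₀ - e₁` (`nullVec`), a null vector of the Lorentz form; `ℓ M` is row 0 minus
row 1 of `M`. Every `n_w` fixes the row vector `ℓ` and `a_s` scales it by `s⁻¹`, so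
`ℓ (n_w a_s k) = s⁻¹ ℓ k`, whose squared Euclidean length is `2 s⁻²` because `k` is orthogonal.
On the other side `x = ℓ k(γ) n_u` is again null, with light-cone coordinates
`x₀ + x₁ = 1 - u₁₁` and `x₀ - x₁ = 1 + u₁₁ + 2β`; `a_r` multiplies these by `r` and `r⁻¹` and
fixes the other coordinates, so for null `x` the squared length of `x a_r` is
`(r (x₀ + x₁) + r⁻¹ (x₀ - x₁))² / 2`.
Both light-cone coordinates are nonnegative (Cauchy–Schwarz on the first row of `u₀`), and the
formula for `s⁻¹` is the nonnegative square root of the resulting identity.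
-/

open Matrix

/-- The element `a_r = exp((log r) E) ∈ SO(1, m+1)`, with `cosh(log r)`, `sinh(log r)`
in the upper-left 2×2 block and the identity elsewhere. -/
noncomputable def aMat (m : ℕ) (r : ℝ) : Matrix (Fin (m + 2)) (Fin (m + 2)) ℝ :=
  Matrix.of fun i j =>
    if i.val = 0 ∧ j.val = 0 then Real.cosh (Real.log r)
    else if i.val = 0 ∧ j.val = 1 then Real.sinh (Real.log r)
    else if i.val = 1 ∧ j.val = 0 then Real.sinh (Real.log r)
    else if i.val = 1 ∧ j.val = 1 then Real.cosh (Real.log r)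
    else if i = j then 1 else 0

/-- The unipotent element `n_u = exp(Σᵢ uᵢ Eᵢ) ∈ SO(1, m+1)` of the Iwasawa
decomposition, in its explicit matrix form. -/
noncomputable def nMat (m : ℕ) (u : Fin m → ℝ) : Matrix (Fin (m + 2)) (Fin (m + 2)) ℝ :=
  Matrix.of fun i j =>
    if hi0 : i.val = 0 then
      if hj0 : j.val = 0 then 1 + (∑ k, u k ^ 2) / 2
      else if hj1 : j.val = 1 then -((∑ k, u k ^ 2) / 2)
      else u ⟨j.val - 2, by have := j.isLt; omega⟩
    else if hi1 : i.val = 1 then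
      if hj0 : j.val = 0 then (∑ k, u k ^ 2) / 2
      else if hj1 : j.val = 1 then 1 - (∑ k, u k ^ 2) / 2
      else u ⟨j.val - 2, by have := j.isLt; omega⟩
    else
      if hj0 : j.val = 0 then u ⟨i.val - 2, by have := i.isLt; omega⟩
      else if hj1 : j.val = 1 then -u ⟨i.val - 2, by have := i.isLt; omega⟩
      else if i = j then 1 else 0

/-- The element `k(γ) = diag(1, u₀)` of `K ⊂ SO(1, m+1)`, where `u₀ ∈ SO(m+1)`. -/
noncomputable def diagK (m : ℕ) (u₀ : Matrix (Fin (m + 1)) (Fin (m + 1)) ℝ) :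
    Matrix (Fin (m + 2)) (Fin (m + 2)) ℝ :=
  Matrix.of fun i j =>
    if hi0 : i.val = 0 then (if j.val = 0 then (1:ℝ) else 0)
    else if hj0 : j.val = 0 then 0
    else u₀ ⟨i.val - 1, by have := i.isLt; omega⟩ ⟨j.val - 1, by have := j.isLt; omega⟩

def nullVec (m : ℕ) : Fin (m + 2) → ℝ := Fin.cons 1 (Fin.cons (-1) 0)

lemma nullVec_vecMul (m : ℕ) (M : Matrix (Fin (m + 2)) (Fin (m + 2)) ℝ) :
    nullVec m ᵥ* M = M 0 - M 1 := by
  ext j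
  simp [nullVec, vecMul, dotProduct, Fin.sum_univ_succ]
  ring

lemma nullVec_dotProduct_self (m : ℕ) : nullVec m ⬝ᵥ nullVec m = 2 := by
  simp [nullVec, dotProduct, Fin.sum_univ_succ]
  norm_num

lemma nullVec_vecMul_nMat (m : ℕ) (w : Fin m → ℝ) : nullVec m ᵥ* nMat m w = nullVec m := by
  ext j
  rw [nullVec_vecMul]
  refine Fin.cases ?_ (Fin.cases ?_ fun j => ?_) j <;> simp [nMat, nullVec]
  ring

lemma nullVec_vecMul_aMat (m : ℕ) {s : ℝ} (hs : 0 < s) :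
    nullVec m ᵥ* aMat m s = s⁻¹ • nullVec m := by
  ext j
  rw [nullVec_vecMul]
  refine Fin.cases ?_ (Fin.cases ?_ fun j => ?_) j <;>
    simp [aMat, nullVec, Real.exp_neg, Real.exp_log hs, (Fin.succ_ne_zero _).symm,
      (Fin.succ_succ_ne_one _).symm]

lemma nullVec_vecMul_diagK (m : ℕ) (u₀ : Matrix (Fin (m + 1)) (Fin (m + 1)) ℝ) :
    nullVec m ᵥ* diagK m u₀ = Fin.cons 1 (-u₀ 0) := by
  ext j
  rw [nullVec_vecMul]
  refine Fin.cases ?_ (fun j => ?_) j <;> simp [diagK]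

lemma dotProduct_self_vecMul_of_mul_transpose_eq_one {ι R : Type*} [Fintype ι] [DecidableEq ι]
    [CommRing R] {k : Matrix ι ι R} (hk : k * kᵀ = 1) (v : ι → R) :
    v ᵥ* k ⬝ᵥ v ᵥ* k = v ⬝ᵥ v := by
  rw [← dotProduct_mulVec, ← vecMul_transpose, vecMul_vecMul, hk, vecMul_one]

lemma dotProduct_self_fin_add_two {m : ℕ} (x : Fin (m + 2) → ℝ) :
    x ⬝ᵥ x = ((x 0 + x 1) ^ 2 + (x 0 - x 1) ^ 2) / 2 + ∑ j : Fin m, x j.succ.succ ^ 2 := by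
  simp [dotProduct, Fin.sum_univ_succ, sq]
  ring

section vecMul_aMat

variable {m : ℕ} {r : ℝ} (x : Fin (m + 2) → ℝ)

lemma vecMul_aMat_zero_add_one (hr : 0 < r) :
    (x ᵥ* aMat m r) 0 + (x ᵥ* aMat m r) 1 = r * (x 0 + x 1) := by
  simp [vecMul, dotProduct, Fin.sum_univ_succ, aMat, Fin.succ_succ_ne_one, Real.cosh_eq,
    Real.sinh_eq, Real.exp_neg, Real.exp_log hr]
  ring

lemma vecMul_aMat_zero_sub_one (hr : 0 < r) :
    (x ᵥ* aMat m r) 0 - (x ᵥ* aMat m r) 1 = r⁻¹ * (x 0 - x 1) := by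
  simp [vecMul, dotProduct, Fin.sum_univ_succ, aMat, Fin.succ_succ_ne_one, Real.cosh_eq,
    Real.sinh_eq, Real.exp_neg, Real.exp_log hr]
  ring

lemma vecMul_aMat_succ_succ (j : Fin m) : (x ᵥ* aMat m r) j.succ.succ = x j.succ.succ := by
  simp [vecMul, dotProduct, aMat]

end vecMul_aMat

section vecMul_nMat

variable {m : ℕ} (y : Fin (m + 2) → ℝ) (U : Fin m → ℝ)

lemma vecMul_nMat_zero_add_one : (y ᵥ* nMat m U) 0 + (y ᵥ* nMat m U) 1 = y 0 + y 1 := by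
  simp [vecMul, dotProduct, Fin.sum_univ_succ, nMat]
  ring

lemma vecMul_nMat_zero_sub_one : (y ᵥ* nMat m U) 0 - (y ᵥ* nMat m U) 1 =
    (y 0 - y 1) + (y 0 + y 1) * ∑ j, U j ^ 2 + 2 * ∑ j, y j.succ.succ * U j := by
  simp [vecMul, dotProduct, Fin.sum_univ_succ, nMat]
  ring

lemma vecMul_nMat_succ_succ (j : Fin m) :
    (y ᵥ* nMat m U) j.succ.succ = (y 0 + y 1) * U j + y j.succ.succ := by
  simp [vecMul, dotProduct, Fin.sum_univ_succ, nMat]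
  ring

end vecMul_nMat

lemma dotProduct_self_vecMul_aMat {m : ℕ} {r : ℝ} (hr : 0 < r) {x : Fin (m + 2) → ℝ}
    (hx : ∑ j : Fin m, x j.succ.succ ^ 2 = x 0 ^ 2 - x 1 ^ 2) :
    x ᵥ* aMat m r ⬝ᵥ x ᵥ* aMat m r = (r * (x 0 + x 1) + r⁻¹ * (x 0 - x 1)) ^ 2 / 2 := by
  simp only [dotProduct_self_fin_add_two, vecMul_aMat_zero_add_one x hr,
    vecMul_aMat_zero_sub_one x hr, vecMul_aMat_succ_succ, hx]
  field_simp
  ring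

lemma dotProduct_self_nullVec_vecMul_nMat_mul_aMat_mul {m : ℕ} {s : ℝ} (hs : 0 < s)
    (w : Fin m → ℝ) {k : Matrix (Fin (m + 2)) (Fin (m + 2)) ℝ} (hk : k * kᵀ = 1) :
    nullVec m ᵥ* (nMat m w * aMat m s * k) ⬝ᵥ nullVec m ᵥ* (nMat m w * aMat m s * k) =
      2 * s⁻¹ ^ 2 := by
  rw [← vecMul_vecMul, ← vecMul_vecMul, nullVec_vecMul_nMat, nullVec_vecMul_aMat m hs,
    smul_vecMul, dotProduct_smul, smul_dotProduct,
    dotProduct_self_vecMul_of_mul_transpose_eq_one hk, nullVec_dotProduct_self]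
  simp only [smul_eq_mul]
  ring

section unitRow

variable {m : ℕ} {g : ℝ} {c : Fin m → ℝ}

lemma sum_sub_sq_eq_of_sq_add_sum_sq_eq_one (hgc : g ^ 2 + ∑ j, c j ^ 2 = 1) (U : Fin m → ℝ) :
    ∑ j, ((1 - g) * U j - c j) ^ 2 =
      (1 - g) * ((1 + g) + (1 - g) * ∑ j, U j ^ 2 - 2 * ∑ j, c j * U j) := by
  simp only [sub_sq, mul_pow, Finset.sum_add_distrib, Finset.sum_sub_distrib, ← Finset.mul_sum]
  have : ∑ j, 2 * ((1 - g) * U j) * c j = 2 * (1 - g) * ∑ j, c j * U j := by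
    rw [Finset.mul_sum]; exact Finset.sum_congr rfl fun j _ => by ring
  rw [this]
  linear_combination hgc

lemma two_mul_sum_le_of_sq_add_sum_sq_eq_one (hgc : g ^ 2 + ∑ j, c j ^ 2 = 1) (U : Fin m → ℝ) :
    2 * ∑ j, c j * U j ≤ (1 + g) + (1 - g) * ∑ j, U j ^ 2 := by
  have hcU := Finset.sum_mul_sq_le_sq_mul_sq Finset.univ c U
  have hU : 0 ≤ ∑ j, U j ^ 2 := Finset.sum_nonneg fun j _ => sq_nonneg _
  have hc : 0 ≤ ∑ j, c j ^ 2 := Finset.sum_nonneg fun j _ => sq_nonneg _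
  have hg : 0 ≤ 1 + g := by nlinarith
  have hgU : 0 ≤ (1 - g) * ∑ j, U j ^ 2 := mul_nonneg (by nlinarith) hU
  -- AM-GM on top of Cauchy-Schwarz: `(2 c⬝U)² ≤ 4 |c|² |U|² = 4 (1 + g) (1 - g) |U|²`
  have hsq : (2 * ∑ j, c j * U j) ^ 2 ≤ ((1 + g) + (1 - g) * ∑ j, U j ^ 2) ^ 2 := by
    nlinarith [sq_nonneg ((1 + g) - (1 - g) * ∑ j, U j ^ 2)]
  exact (abs_le_of_sq_le_sq' hsq (add_nonneg hg hgU)).2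

end unitRow

lemma inv_eq_of_nMat_mul_aMat_mul_eq {m : ℕ} {u₀ : Matrix (Fin (m + 1)) (Fin (m + 1)) ℝ}
    (hortho : u₀ * u₀ᵀ = 1) (U : Fin m → ℝ) {r s : ℝ} (hr : 0 < r) (hs : 0 < s)
    (w : Fin m → ℝ) {k : Matrix (Fin (m + 2)) (Fin (m + 2)) ℝ} (hk : k * kᵀ = 1)
    (heq : nMat m w * aMat m s * k = diagK m u₀ * nMat m U * aMat m r) :
    s⁻¹ = (1 - u₀ 0 0) / 2 * r + ((1 + u₀ 0 0) / 2 +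
      ((1 - u₀ 0 0) * (∑ j, U j ^ 2) / 2 - ∑ j, u₀ 0 j.succ * U j)) * r⁻¹ := by
  set g := u₀ 0 0
  have hrow : g ^ 2 + ∑ j : Fin m, u₀ 0 j.succ ^ 2 = 1 := by
    simpa [mul_apply, Fin.sum_univ_succ, sq] using congrFun (congrFun hortho 0) 0
  set x := (Fin.cons 1 (-u₀ 0) : Fin (m + 2) → ℝ) ᵥ* nMat m U
  have hp : x 0 + x 1 = 1 - g := by
    rw [vecMul_nMat_zero_add_one]
    simp [g, sub_eq_add_neg]
  have hq : x 0 - x 1 = (1 + g) + (1 - g) * ∑ j, U j ^ 2 - 2 * ∑ j, u₀ 0 j.succ * U j := by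
    rw [vecMul_nMat_zero_sub_one]
    simp [g]
    ring
  have hnull : ∑ j : Fin m, x j.succ.succ ^ 2 = x 0 ^ 2 - x 1 ^ 2 := by
    have hx (j : Fin m) : x j.succ.succ = (1 - g) * U j - u₀ 0 j.succ :=
      (vecMul_nMat_succ_succ _ U j).trans (by simp [g, sub_eq_add_neg])
    simp only [hx, sum_sub_sq_eq_of_sq_add_sum_sq_eq_one hrow, sq_sub_sq, hp, hq]
  have hsq : 2 * s⁻¹ ^ 2 = (r * (x 0 + x 1) + r⁻¹ * (x 0 - x 1)) ^ 2 / 2 := by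
    have h := congrArg (fun M => nullVec m ᵥ* M ⬝ᵥ nullVec m ᵥ* M) heq
    rwa [dotProduct_self_nullVec_vecMul_nMat_mul_aMat_mul hs w hk, ← vecMul_vecMul,
      ← vecMul_vecMul, nullVec_vecMul_diagK, dotProduct_self_vecMul_aMat hr hnull] at h
  have hpos : 0 ≤ r * (x 0 + x 1) + r⁻¹ * (x 0 - x 1) := by
    have hc : 0 ≤ ∑ j : Fin m, u₀ 0 j.succ ^ 2 := Finset.sum_nonneg fun j _ => sq_nonneg _
    have hg : g ≤ 1 := by nlinarith
    rw [hp, hq]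
    have := two_mul_sum_le_of_sq_add_sum_sq_eq_one hrow U
    exact add_nonneg (mul_nonneg hr.le (by linarith))
      (mul_nonneg (inv_nonneg.2 hr.le) (by linarith))
  have : s⁻¹ = (r * (x 0 + x 1) + r⁻¹ * (x 0 - x 1)) / 2 :=
    (pow_left_inj₀ (inv_nonneg.2 hs.le) (by positivity) two_ne_zero).1
      (by linear_combination hsq / 2)
  rw [this, hp, hq]
  ring

lemma sum_apply_dite_lt {α M : Type*} [Zero α] [AddCommMonoid M] {p m : ℕ} (hpm : p ≤ m)
    (u : Fin p → α) (f : Fin m → α → M) (hf : ∀ i, f i 0 = 0) :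
    ∑ i : Fin m, f i (if h : i.val < p then u ⟨i.val, h⟩ else 0) =
      ∑ j : Fin p, f (Fin.castLE hpm j) (u j) := by
  refine (Fintype.sum_of_injective (Fin.castLE hpm) (Fin.castLE_injective hpm) _ _
    (fun i hi => ?_) fun j => by simp).symm
  have : ¬ i.val < p := fun h => hi ⟨⟨i.val, h⟩, rfl⟩
  simp [this, hf]

/-- If `n_w a_s k = k(γ) n_u a_r` is an Iwasawa (NAK) factorization in `SO(1, d)`
(here `d = m+1`) with `k(γ) = diag(1, u₀)`, `u₀ = (u_{ij}) ∈ SO(d)`, and `u ∈ ℝ^{n-1}`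
embedded as `(u₁,…,u_{n-1},0,…,0)` in `ℝ^{d-1}`, then
`s⁻¹ = ((1−u₁₁)/2) r + ((1+u₁₁)/2 + β) r⁻¹` where
`β = (1−u₁₁)|u|²/2 − Σ_{i=2}^{n} u_{1i} u_{i-1}`. -/
theorem iwasawa_s_inv (n m : ℕ) (hnm : n - 1 ≤ m)
    (u₀ : Matrix (Fin (m + 1)) (Fin (m + 1)) ℝ) (hortho : u₀ * u₀ᵀ = 1)
    (u : Fin (n - 1) → ℝ) (r s : ℝ) (hr : 0 < r) (hs : 0 < s)
    (w : Fin m → ℝ) (k : Matrix (Fin (m + 2)) (Fin (m + 2)) ℝ) (hk : k * kᵀ = 1)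
    (heq : nMat m w * aMat m s * k =
      diagK m u₀ *
        nMat m (fun i => if h : i.val < n - 1 then u ⟨i.val, h⟩ else 0) * aMat m r) :
    s⁻¹ = ((1 - u₀ 0 0) / 2) * r +
      ((1 + u₀ 0 0) / 2 +
        ((1 - u₀ 0 0) * (∑ j, u j ^ 2) / 2
          - ∑ j : Fin (n - 1), u₀ 0 ⟨j.val + 1, by have := j.isLt; omega⟩ * u j)) * r⁻¹ := by
  have h := inv_eq_of_nMat_mul_aMat_mul_eq hortho _ hr hs w hk heq
  rwa [sum_apply_dite_lt hnm u (fun _ x => x ^ 2) (fun _ => zero_pow two_ne_zero),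
    sum_apply_dite_lt hnm u (fun i x => u₀ 0 i.succ * x) (fun _ => mul_zero _)] at h
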